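/- Let (R,𝔪) be a noetherian local ring, M a finitely generated R-module, and f₁,…,f_r ∈ 𝔪. Suppose depth_{R_𝔭}(M_𝔭) ≥ r for every prime 𝔭 ∈ Supp(M/(f₁,…,f_r)M). Then for every 𝔭 ∈ Ass(M) we have f₁ ∉ 𝔭; in particular, f₁ is a non-zero divisor on M. -/

import Mathlib

open RingTheory.Sequence

/-- The paper's notion of a regular sequence on `M`: for every prime `𝔭` in the support of
`M/(f₁,…,f_r)M`, the images of `f₁,…,f_r` in `R_𝔭` form a strongly regular sequence
(i.e. a weakly regular sequence in the sense of Mathlib) on `M_𝔭`. -/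
def IsRegularSeq (R : Type*) [CommRing R] (M : Type*) [AddCommGroup M] [Module R M]
    (fs : List R) : Prop :=
  ∀ p ∈ Module.support R (M ⧸ (Ideal.ofList fs • ⊤ : Submodule R M)),
    IsWeaklyRegular (LocalizedModule p.asIdeal.primeCompl M)
      (fs.map (algebraMap R (Localization.AtPrime p.asIdeal)))

/-- The depth of a module `M` over a local ring `R`: the supremum of the lengths of
(strongly) regular sequences on `M` consisting of elements of the maximal ideal. -/
noncomputable def moduleDepth (R M : Type*) [CommRing R] [IsLocalRing R]
    [AddCommGroup M] [Module R M] : ℕ∞ :=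
  sSup {n : ℕ∞ | ∃ fs : List R, (fs.length : ℕ∞) = n ∧
    (∀ f ∈ fs, f ∈ IsLocalRing.maximalIdeal R) ∧ IsWeaklyRegular M fs}

set_option linter.unusedSectionVars false
set_option linter.unusedVariables false
set_option maxHeartbeats 1000000

open Pointwise IsLocalRing

section Helpers

variable {R : Type*} [CommRing R]

lemma isSMulRegular_of_smul_eq_zero' {M : Type*} [AddCommGroup M] [Module R M] {r : R}
    (h : ∀ m : M, r • m = 0 → m = 0) : IsSMulRegular M r := fun a b hab => by
  have : r • (a - b) = 0 := by
    rw [smul_sub, sub_eq_zero]; exact hab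
  exact sub_eq_zero.mp (h _ this)

lemma colon_bot_singleton_eq' {M : Type*} [AddCommGroup M] [Module R M] (x : M) :
    (⊥ : Submodule R M).colon {x} = (Submodule.span R {x}).annihilator := by
  ext r
  rw [Submodule.mem_colon_singleton, Submodule.mem_bot, Submodule.mem_annihilator_span_singleton]

lemma isAssociatedPrime_iff' [IsNoetherianRing R] {M : Type*} [AddCommGroup M] [Module R M]
    {I : Ideal R} :
    IsAssociatedPrime I M ↔ I.IsPrime ∧ ∃ x : M, I = (Submodule.span R {x}).annihilator := by
  rw [isAssociatedPrime_iff]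
  simp only [colon_bot_singleton_eq']

lemma mem_span_singleton_smul_top_iff {M : Type*} [AddCommGroup M] [Module R M] (g : R) (x : M) :
    x ∈ (Ideal.span {g} • ⊤ : Submodule R M) ↔ ∃ m : M, g • m = x := by
  constructor
  · intro hx
    refine Submodule.smul_induction_on hx ?_ ?_
    · rintro r hr n -
      obtain ⟨c, rfl⟩ := Ideal.mem_span_singleton.mp hr
      exact ⟨c • n, by rw [mul_smul]⟩
    · rintro x y ⟨m, rfl⟩ ⟨m', rfl⟩
      exact ⟨m + m', by rw [smul_add]⟩
  · rintro ⟨m, rfl⟩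
    exact Submodule.smul_mem_smul (Submodule.mem_span_singleton_self g) trivial

lemma mem_pointwise_smul_top_iff {M : Type*} [AddCommGroup M] [Module R M] (g : R) (x : M) :
    x ∈ (g • ⊤ : Submodule R M) ↔ ∃ m : M, g • m = x := by
  rw [← Submodule.ideal_span_singleton_smul]
  exact mem_span_singleton_smul_top_iff g x

lemma exists_associated_of_not_regular [IsNoetherianRing R] {M : Type*} [AddCommGroup M]
    [Module R M] {r : R} (h : ¬ IsSMulRegular M r) : ∃ P ∈ associatedPrimes R M, r ∈ P := by
  rw [IsSMulRegular, Function.Injective] at h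
  push_neg at h
  obtain ⟨a, b, hab, hne⟩ := h
  obtain ⟨P, hP, hle⟩ := exists_le_isAssociatedPrime_of_isNoetherianRing R (a - b)
    (sub_ne_zero.mpr hne)
  refine ⟨P, hP, hle ?_⟩
  rw [Submodule.mem_colon_singleton, Submodule.mem_bot, smul_sub, sub_eq_zero]
  exact hab

lemma isAssociatedPrime_or [IsNoetherianRing R] {W : Type*} [AddCommGroup W] [Module R W]
    {P : Ideal R} (hP : IsAssociatedPrime P W) (U : Submodule R W) :
    IsAssociatedPrime P U ∨ IsAssociatedPrime P (W ⧸ U) := by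
  obtain ⟨hp, w, hw⟩ := isAssociatedPrime_iff'.mp hP
  by_cases hc : ∀ a : R, a • w ∈ U → a • w = 0
  · right
    refine isAssociatedPrime_iff'.mpr ⟨hp, U.mkQ w, ?_⟩
    apply le_antisymm
    · intro b hb
      rw [Submodule.mem_annihilator_span_singleton, ← map_smul]
      have : b • w = 0 := (Submodule.mem_annihilator_span_singleton w b).mp (hw ▸ hb)
      rw [this, map_zero]
    · intro b hb
      rw [Submodule.mem_annihilator_span_singleton, ← map_smul, Submodule.mkQ_apply,
        Submodule.Quotient.mk_eq_zero] at hb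
      rw [hw, Submodule.mem_annihilator_span_singleton]
      exact hc b hb
  · push_neg at hc
    obtain ⟨a, haU, ha0⟩ := hc
    left
    refine isAssociatedPrime_iff'.mpr ⟨hp, ⟨a • w, haU⟩, ?_⟩
    apply le_antisymm
    · intro b hb
      rw [Submodule.mem_annihilator_span_singleton]
      have hbw : b • w = 0 := (Submodule.mem_annihilator_span_singleton w b).mp (hw ▸ hb)
      exact Subtype.ext (by
        show b • (a • w) = 0
        rw [smul_comm, hbw, smul_zero])
    · intro b hb
      rw [Submodule.mem_annihilator_span_singleton] at hb
      have hval : b • (a • w) = 0 := congrArg Subtype.val hb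
      have : (b * a) • w = 0 := by rw [mul_smul]; exact hval
      have hba : b * a ∈ P := by
        rw [hw, Submodule.mem_annihilator_span_singleton]; exact this
      rcases hp.mem_or_mem hba with h | h
      · exact h
      · rw [hw, Submodule.mem_annihilator_span_singleton] at h
        exact absurd h ha0

lemma isAssociatedPrime_span_singleton_eq [IsNoetherianRing R] {W : Type*} [AddCommGroup W] [Module R W]
    {P q : Ideal R} (hq : q.IsPrime) {x : W} (hx : q = (Submodule.span R {x}).annihilator)
    (hP : IsAssociatedPrime P ↥(Submodule.span R {x})) : P = q := by
  obtain ⟨hp, u, hu⟩ := isAssociatedPrime_iff'.mp hP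
  obtain ⟨c, hc⟩ := Submodule.mem_span_singleton.mp u.2
  have hu0 : (u : W) ≠ 0 := by
    intro hval
    apply hp.ne_top
    rw [hu, show u = 0 from Subtype.ext hval, Submodule.span_singleton_eq_bot.mpr rfl,
      Submodule.annihilator_bot]
  apply le_antisymm
  · intro b hb
    have hbu : b • (u : W) = 0 := by
      have := (Submodule.mem_annihilator_span_singleton u b).mp (hu ▸ hb)
      exact congrArg Subtype.val this
    have hbcx : (b * c) • x = 0 := by rw [mul_smul, hc]; exact hbu
    have hbc : b * c ∈ q := by
      rw [hx, Submodule.mem_annihilator_span_singleton]; exact hbcx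
    rcases hq.mem_or_mem hbc with h | h
    · exact h
    · exfalso
      apply hu0
      rw [hx, Submodule.mem_annihilator_span_singleton] at h
      rw [← hc]; exact h
  · intro b hb
    have hbx : b • x = 0 := by
      rw [hx, Submodule.mem_annihilator_span_singleton] at hb; exact hb
    rw [hu, Submodule.mem_annihilator_span_singleton]
    apply Subtype.ext
    show b • (u : W) = 0
    rw [← hc, smul_comm, hbx, smul_zero]

lemma associatedPrimes_finite (R M : Type*) [CommRing R] [IsNoetherianRing R] [AddCommGroup M]
    [Module R M] [Module.Finite R M] : (associatedPrimes R M).Finite := by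
  by_contra hinf
  obtain ⟨N, hN, hNmax⟩ := (set_has_maximal_iff_noetherian.mpr
      (inferInstance : IsNoetherian R M))
      {N : Submodule R M | ¬ (associatedPrimes R (M ⧸ N)).Finite}
      ⟨⊥, by
        rw [Set.mem_setOf_eq, LinearEquiv.AssociatedPrimes.eq (Submodule.quotEquivOfEqBot ⊥ rfl)]
        exact hinf⟩
  rw [Set.mem_setOf_eq] at hN
  haveI : Nontrivial (M ⧸ N) := by
    by_contra hs
    rw [not_nontrivial_iff_subsingleton] at hs
    exact hN (by rw [associatedPrimes.eq_empty_of_subsingleton]; exact Set.finite_empty)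
  obtain ⟨q, hq⟩ := associatedPrimes.nonempty R (M ⧸ N)
  obtain ⟨hqp, xb, hxb⟩ := isAssociatedPrime_iff'.mp hq
  have hxb0 : xb ≠ 0 := by
    rintro rfl
    exact hqp.ne_top (hxb.trans (by
      rw [Submodule.span_singleton_eq_bot.mpr rfl, Submodule.annihilator_bot]))
  set N' := Submodule.comap N.mkQ (Submodule.span R {xb}) with hN'def
  obtain ⟨x, hx⟩ := N.mkQ_surjective xb
  have hNN' : N < N' := by
    refine lt_of_le_of_ne (fun y hy => ?_) (fun he => ?_)
    · show N.mkQ y ∈ Submodule.span R {xb}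
      rw [Submodule.mkQ_apply, (Submodule.Quotient.mk_eq_zero N).mpr hy]
      exact zero_mem _
    · have hxN' : x ∈ N' := by
        show N.mkQ x ∈ Submodule.span R {xb}
        rw [hx]
        exact Submodule.mem_span_singleton_self xb
      rw [← he] at hxN'
      exact hxb0 (by rw [← hx, Submodule.mkQ_apply, Submodule.Quotient.mk_eq_zero]; exact hxN')
  have hN'fin : (associatedPrimes R (M ⧸ N')).Finite := by
    by_contra hc
    exact hNmax N' hc hNN'
  apply hN
  have hmap : Submodule.map N.mkQ N' = Submodule.span R {xb} := by
    rw [hN'def, Submodule.map_comap_eq, Submodule.range_mkQ, top_inf_eq]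
  have e : ((M ⧸ N) ⧸ (Submodule.span R {xb})) ≃ₗ[R] M ⧸ N' :=
    (Submodule.quotEquivOfEq _ _ hmap.symm).trans
      (Submodule.quotientQuotientEquivQuotient N N' hNN'.le)
  have hsub : associatedPrimes R (M ⧸ N) ⊆ insert q (associatedPrimes R (M ⧸ N')) := by
    intro P hP
    rcases isAssociatedPrime_or hP (Submodule.span R {xb}) with h1 | h2
    · exact Set.mem_insert_iff.mpr (Or.inl (isAssociatedPrime_span_singleton_eq hqp hxb h1))
    · exact Set.mem_insert_iff.mpr (Or.inr (e.isAssociatedPrime_iff.mp h2))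
  exact ((hN'fin.insert q).subset hsub)

end Helpers

section CAV

variable {R : Type*} [CommRing R]

lemma coset_avoidance :
    ∀ (s : Finset (Ideal R)), (∀ p ∈ s, p.IsPrime) → ∀ (J : Ideal R) (b : R),
    (∀ p ∈ s, ¬(J ≤ p ∧ b ∈ p)) → ∃ a ∈ J, ∀ p ∈ s, b + a ∉ p := by
  intro s
  induction s using Finset.strongInduction with
  | _ s ih =>
    intro hprime J b hcond
    classical
    rcases s.eq_empty_or_nonempty with rfl | hne
    · exact ⟨0, J.zero_mem, by simp⟩
    obtain ⟨p₀, hp₀s, hp₀min⟩ : ∃ a ∈ (↑s : Set (Ideal R)),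
        ∀ a' ∈ (↑s : Set (Ideal R)), id a' ≤ id a → id a = id a' := by
      obtain ⟨a, ha⟩ := s.finite_toSet.exists_minimal (by exact_mod_cast hne)
      exact ⟨a, ha.1, fun a' ha' hle => (ha.eq_of_le ha' hle).symm⟩
    simp only [id] at hp₀min
    replace hp₀s : p₀ ∈ s := hp₀s
    set t := s.erase p₀ with ht
    have hts : t ⊂ s := Finset.erase_ssubset hp₀s
    obtain ⟨a, haJ, ha⟩ := ih t hts (fun p hp => hprime p (Finset.mem_of_mem_erase hp)) J b
      (fun p hp => hcond p (Finset.mem_of_mem_erase hp))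
    by_cases hba : b + a ∈ p₀
    · haveI hp₀p : p₀.IsPrime := hprime p₀ hp₀s
      have hJp₀ : ¬ J ≤ p₀ := by
        intro hJ
        refine hcond p₀ hp₀s ⟨hJ, ?_⟩
        have := p₀.sub_mem hba (hJ haJ)
        simpa using this
      obtain ⟨c, hcJ, hcp₀⟩ := SetLike.not_le_iff_exists.mp hJp₀
      have hw : ∀ p ∈ t, ∃ w, w ∈ p ∧ w ∉ p₀ := by
        intro p hp
        have hpne : p ≠ p₀ := Finset.ne_of_mem_erase hp
        have : ¬ p ≤ p₀ := fun hle => hpne ((hp₀min p (Finset.mem_of_mem_erase hp) hle).symm)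
        exact SetLike.not_le_iff_exists.mp this
      choose w hw1 hw2 using hw
      set e := ∏ p ∈ t.attach, w p.1 p.2 with he
      have hep : ∀ p ∈ t, e ∈ p := by
        intro p hp
        have hdvd : w p hp ∣ e := Finset.dvd_prod_of_mem (fun q => w q.1 q.2)
          (Finset.mem_attach _ ⟨p, hp⟩)
        obtain ⟨k, hk⟩ := hdvd
        rw [hk]
        exact Ideal.mul_mem_right _ _ (hw1 p hp)
      have hep₀ : e ∉ p₀ := by
        intro hee
        obtain ⟨⟨p, hp⟩, -, hmem⟩ := (Ideal.IsPrime.prod_mem_iff).mp hee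
        exact hw2 p hp hmem
      refine ⟨a + c * e, J.add_mem haJ (J.mul_mem_right _ hcJ), ?_⟩
      intro p hp
      by_cases hpp₀ : p = p₀
      · subst hpp₀
        intro hmem
        have hce : c * e ∈ p := by
          have := p.sub_mem hmem hba
          simpa [add_sub_add_comm, add_sub_cancel_left] using this
        rcases hp₀p.mem_or_mem hce with h | h
        · exact hcp₀ h
        · exact hep₀ h
      · have hpt : p ∈ t := Finset.mem_erase.mpr ⟨hpp₀, hp⟩
        intro hmem
        apply ha p hpt
        have hrw : b + a = (b + (a + c * e)) - c * e := by ring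
        rw [hrw]
        exact p.sub_mem hmem (Ideal.mul_mem_left _ c (hep p hpt))
    · exact ⟨a, haJ, fun p hp => by
        by_cases hpp₀ : p = p₀
        · subst hpp₀; exact hba
        · exact ha p (Finset.mem_erase.mpr ⟨hpp₀, hp⟩)⟩

end CAV

section LocalRing

variable {S : Type*} [CommRing S] [IsLocalRing S] [IsNoetherianRing S]

lemma maximalIdeal_not_mem_ass {W : Type*} [AddCommGroup W] [Module S W]
    (h : ∃ z ∈ maximalIdeal S, IsSMulRegular W z) :
    maximalIdeal S ∉ associatedPrimes S W := by
  intro hPmem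
  obtain ⟨hP, w, hw⟩ := isAssociatedPrime_iff'.mp hPmem
  obtain ⟨z, hz, hreg⟩ := h
  have hw0 : w ≠ 0 := by
    rintro rfl
    exact hP.ne_top (hw.trans (by
      rw [Submodule.span_singleton_eq_bot.mpr rfl, Submodule.annihilator_bot]))
  have hzw : z • w = 0 :=
    (Submodule.mem_annihilator_span_singleton w z).mp (hw ▸ hz)
  exact hw0 (hreg (show z • w = z • 0 by rw [hzw, smul_zero]))

lemma maximalIdeal_mem_ass_of_no_regular {W : Type*} [AddCommGroup W] [Module S W]
    [Module.Finite S W]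
    (h : ¬ ∃ z ∈ maximalIdeal S, IsSMulRegular W z) :
    maximalIdeal S ∈ associatedPrimes S W := by
  have hfin := associatedPrimes_finite S W
  have hsub : (maximalIdeal S : Set S) ⊆ ⋃ p ∈ (hfin.toFinset : Set (Ideal S)), (p : Set S) := by
    intro z hz
    push_neg at h
    obtain ⟨P, hP, hzP⟩ := exists_associated_of_not_regular (h z hz)
    exact Set.mem_biUnion (by rwa [Finset.mem_coe, Set.Finite.mem_toFinset]) hzP
  obtain ⟨p, hps, hle⟩ := (Ideal.subset_union_prime (f := fun i => i) ⊥ ⊥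
    (fun i hi _ _ => (hfin.mem_toFinset.mp hi).isPrime)).mp hsub
  have hmem := hfin.mem_toFinset.mp hps
  have : p = maximalIdeal S := le_antisymm (le_maximalIdeal hmem.isPrime.ne_top) hle
  rwa [this] at hmem

lemma exists_common_regular {W₁ W₂ W₃ : Type*}
    [AddCommGroup W₁] [Module S W₁] [Module.Finite S W₁]
    [AddCommGroup W₂] [Module S W₂] [Module.Finite S W₂]
    [AddCommGroup W₃] [Module S W₃] [Module.Finite S W₃]
    (h₁ : ∃ z ∈ maximalIdeal S, IsSMulRegular W₁ z)
    (h₂ : ∃ z ∈ maximalIdeal S, IsSMulRegular W₂ z)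
    (h₃ : ∃ z ∈ maximalIdeal S, IsSMulRegular W₃ z) :
    ∃ y ∈ maximalIdeal S, IsSMulRegular W₁ y ∧ IsSMulRegular W₂ y ∧ IsSMulRegular W₃ y := by
  have hU : (associatedPrimes S W₁ ∪ associatedPrimes S W₂ ∪ associatedPrimes S W₃).Finite :=
    ((associatedPrimes_finite S W₁).union (associatedPrimes_finite S W₂)).union
      (associatedPrimes_finite S W₃)
  have hprime : ∀ p ∈ hU.toFinset, p.IsPrime := by
    intro p hp
    rw [Set.Finite.mem_toFinset] at hp
    rcases hp with (hp | hp) | hp <;> exact hp.isPrime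
  have hnotsub : ¬ ((maximalIdeal S : Set S) ⊆ ⋃ p ∈ (hU.toFinset : Set (Ideal S)), (p : Set S)) := by
    intro hsub
    obtain ⟨p, hps, hle⟩ := (Ideal.subset_union_prime (f := fun i => i) ⊥ ⊥
      (fun i hi _ _ => hprime i hi)).mp hsub
    have hpm : p = maximalIdeal S := le_antisymm (le_maximalIdeal (hprime p hps).ne_top) hle
    rw [Set.Finite.mem_toFinset, hpm] at hps
    rcases hps with (hp | hp) | hp
    · exact maximalIdeal_not_mem_ass h₁ hp
    · exact maximalIdeal_not_mem_ass h₂ hp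
    · exact maximalIdeal_not_mem_ass h₃ hp
  obtain ⟨y, hy, hyn⟩ := Set.not_subset.mp hnotsub
  have hyP : ∀ P ∈ associatedPrimes S W₁ ∪ associatedPrimes S W₂ ∪ associatedPrimes S W₃,
      y ∉ P := by
    intro P hP hyP'
    exact hyn (Set.mem_biUnion (by
      rw [Finset.mem_coe, Set.Finite.mem_toFinset]; exact hP) hyP')
  refine ⟨y, hy, ?_, ?_, ?_⟩
  · by_contra hr
    obtain ⟨P, hP, hyP'⟩ := exists_associated_of_not_regular hr
    exact hyP P (Or.inl (Or.inl hP)) hyP'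
  · by_contra hr
    obtain ⟨P, hP, hyP'⟩ := exists_associated_of_not_regular hr
    exact hyP P (Or.inl (Or.inr hP)) hyP'
  · by_contra hr
    obtain ⟨P, hP, hyP'⟩ := exists_associated_of_not_regular hr
    exact hyP P (Or.inr hP) hyP'

lemma isSMulRegular_quot_swap {N : Type*} [AddCommGroup N] [Module S N]
    {x y : S} (hx : IsSMulRegular N x) (hy : IsSMulRegular N y)
    (hyx : IsSMulRegular (QuotSMulTop x N) y) : IsSMulRegular (QuotSMulTop y N) x := by
  apply isSMulRegular_of_smul_eq_zero'
  intro w hw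
  obtain ⟨n, rfl⟩ := Submodule.mkQ_surjective _ w
  have hxn : x • n ∈ (y • ⊤ : Submodule S N) := by
    rw [← Submodule.Quotient.mk_eq_zero, ← Submodule.mkQ_apply, map_smul]
    exact hw
  obtain ⟨m, hm⟩ := (mem_pointwise_smul_top_iff y (x • n)).mp hxn
  have hym0 : y • ((x • ⊤ : Submodule S N).mkQ m) = 0 := by
    rw [← map_smul, Submodule.mkQ_apply, Submodule.Quotient.mk_eq_zero, hm]
    exact (mem_pointwise_smul_top_iff x (x • n)).mpr ⟨n, rfl⟩
  have hym : ((x • ⊤ : Submodule S N).mkQ m : QuotSMulTop x N) = 0 :=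
    hyx (show y • _ = y • (0 : QuotSMulTop x N) by rw [hym0, smul_zero])
  rw [Submodule.mkQ_apply, Submodule.Quotient.mk_eq_zero] at hym
  obtain ⟨m', hm'⟩ := (mem_pointwise_smul_top_iff x m).mp hym
  have : x • (y • m') = x • n := by rw [smul_comm, hm', hm]
  have hn : y • m' = n := hx this
  rw [Submodule.mkQ_apply, Submodule.Quotient.mk_eq_zero, ← hn]
  exact (mem_pointwise_smul_top_iff y _).mpr ⟨m', rfl⟩

lemma transfer_no_regular {N : Type*} [AddCommGroup N] [Module S N] [Module.Finite S N]
    {x y : S} (hx : IsSMulRegular N x) (hy : IsSMulRegular N y) (hym : y ∈ maximalIdeal S)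
    (h : ¬ ∃ z ∈ maximalIdeal S, IsSMulRegular (QuotSMulTop x N) z) :
    ¬ ∃ z ∈ maximalIdeal S, IsSMulRegular (QuotSMulTop y N) z := by
  intro hDZy
  obtain ⟨-, nb, hnb⟩ := isAssociatedPrime_iff'.mp (maximalIdeal_mem_ass_of_no_regular h)
  obtain ⟨n, rfl⟩ := Submodule.mkQ_surjective _ nb
  have hn_not : n ∉ (x • ⊤ : Submodule S N) := by
    intro hmem
    have h0 : ((x • ⊤ : Submodule S N).mkQ n : QuotSMulTop x N) = 0 := by
      rw [Submodule.mkQ_apply, Submodule.Quotient.mk_eq_zero]; exact hmem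
    apply (maximalIdeal S).ne_top_iff_one.mp (IsLocalRing.maximalIdeal.isMaximal S).ne_top
    rw [hnb, h0]
    rw [Submodule.span_singleton_eq_bot.mpr rfl, Submodule.annihilator_bot]
    exact trivial
  have hsmul : ∀ z ∈ maximalIdeal S, z • n ∈ (x • ⊤ : Submodule S N) := by
    intro z hz
    have : z • ((x • ⊤ : Submodule S N).mkQ n) = 0 :=
      (Submodule.mem_annihilator_span_singleton _ z).mp (hnb ▸ hz)
    rw [← map_smul, Submodule.mkQ_apply, Submodule.Quotient.mk_eq_zero] at this
    exact this
  obtain ⟨n', hn'⟩ := (mem_pointwise_smul_top_iff x (y • n)).mp (hsmul y hym)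
  -- x • n' = y • n
  have claim1 : ∀ z ∈ maximalIdeal S, z • n' ∈ (y • ⊤ : Submodule S N) := by
    intro z hz
    obtain ⟨m, hm⟩ := (mem_pointwise_smul_top_iff x (z • n)).mp (hsmul z hz)
    have : x • (z • n') = x • (y • m) := by
      rw [smul_comm, hn', smul_comm z y n, ← hm, smul_comm x y m]
    have h2 := hx this
    rw [h2]
    exact (mem_pointwise_smul_top_iff y _).mpr ⟨m, rfl⟩
  have claim2 : n' ∉ (y • ⊤ : Submodule S N) := by
    intro hmem
    obtain ⟨n'', hn''⟩ := (mem_pointwise_smul_top_iff y n').mp hmem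
    have : y • (x • n'') = y • n := by rw [smul_comm, hn'', hn']
    have h3 := hy this
    exact hn_not (by rw [← h3]; exact (mem_pointwise_smul_top_iff x _).mpr ⟨n'', rfl⟩)
  obtain ⟨z, hz, hzreg⟩ := hDZy
  have hzn' : z • ((y • ⊤ : Submodule S N).mkQ n') = 0 := by
    rw [← map_smul, Submodule.mkQ_apply, Submodule.Quotient.mk_eq_zero]
    exact claim1 z hz
  have : ((y • ⊤ : Submodule S N).mkQ n' : QuotSMulTop y N) = 0 :=
    hzreg (show z • _ = z • (0 : QuotSMulTop y N) by rw [hzn', smul_zero])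
  rw [Submodule.mkQ_apply, Submodule.Quotient.mk_eq_zero] at this
  exact claim2 this

lemma depth_drop :
    ∀ (n : ℕ) {N : Type*} [AddCommGroup N] [Module S N] [Module.Finite S N]
      (l : List S), l.length = n + 1 → (∀ z ∈ l, z ∈ maximalIdeal S) →
      IsWeaklyRegular N l → ∀ x : S, x ∈ maximalIdeal S → IsSMulRegular N x →
      ∃ l' : List S, l'.length = n ∧ (∀ z ∈ l', z ∈ maximalIdeal S) ∧
        IsWeaklyRegular N (x :: l') := by
  intro n
  induction n with
  | zero =>
    intro N _ _ _ l _ _ _ x hx hxreg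
    refine ⟨[], rfl, by simp, ?_⟩
    rw [isWeaklyRegular_cons_iff]
    exact ⟨hxreg, IsWeaklyRegular.nil _ _⟩
  | succ n ih =>
    intro N _ _ _ l hlen hmem hreg x hx hxreg
    obtain ⟨h₁, l₁, rfl⟩ : ∃ a t, l = a :: t := by
      cases l with
      | nil => simp at hlen
      | cons a t => exact ⟨a, t, rfl⟩
    obtain ⟨h₂, l₂, rfl⟩ : ∃ a t, l₁ = a :: t := by
      cases l₁ with
      | nil => simp at hlen
      | cons a t => exact ⟨a, t, rfl⟩
    have h₁m : h₁ ∈ maximalIdeal S := hmem _ (by simp)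
    have h₂m : h₂ ∈ maximalIdeal S := hmem _ (by simp)
    obtain ⟨h₁reg, hrest⟩ := (isWeaklyRegular_cons_iff N h₁ (h₂ :: l₂)).mp hreg
    obtain ⟨h₂reg, -⟩ := (isWeaklyRegular_cons_iff _ h₂ l₂).mp hrest
    have DZ1 : ∃ z ∈ maximalIdeal S, IsSMulRegular (QuotSMulTop h₁ N) z := ⟨h₂, h₂m, h₂reg⟩
    have DZx : ∃ z ∈ maximalIdeal S, IsSMulRegular (QuotSMulTop x N) z := by
      by_contra hc
      exact transfer_no_regular hxreg h₁reg h₁m hc DZ1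
    have DZ0 : ∃ z ∈ maximalIdeal S, IsSMulRegular N z := ⟨h₁, h₁m, h₁reg⟩
    obtain ⟨y, hym, hyN, hyQ1, hyQx⟩ := exists_common_regular DZ0 DZ1 DZx
    obtain ⟨l₂', hlen₂, hmem₂, hreg₂⟩ := ih (N := QuotSMulTop h₁ N) (h₂ :: l₂)
      (by simp at hlen ⊢; omega) (fun z hz => hmem z (List.mem_cons_of_mem _ hz)) hrest
      y hym hyQ1
    have hA : IsWeaklyRegular N (h₁ :: y :: l₂') :=
      (isWeaklyRegular_cons_iff N h₁ (y :: l₂')).mpr ⟨h₁reg, hreg₂⟩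
    have hAmem : ∀ z ∈ h₁ :: y :: l₂', z ∈ maximalIdeal S := by
      intro z hz
      rcases List.mem_cons.mp hz with rfl | hz
      · exact h₁m
      rcases List.mem_cons.mp hz with rfl | hz
      · exact hym
      · exact hmem₂ z hz
    have hB : IsWeaklyRegular N (y :: h₁ :: l₂') :=
      IsLocalRing.isWeaklyRegular_of_perm_of_subset_maximalIdeal hA (List.Perm.swap y h₁ l₂') hAmem
    have hC : IsWeaklyRegular (QuotSMulTop y N) (h₁ :: l₂') :=
      ((isWeaklyRegular_cons_iff N y (h₁ :: l₂')).mp hB).2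
    have hxQy : IsSMulRegular (QuotSMulTop y N) x := isSMulRegular_quot_swap hxreg hyN hyQx
    obtain ⟨l₃, hlen₃, hmem₃, hreg₃⟩ := ih (N := QuotSMulTop y N) (h₁ :: l₂')
      (by simp [hlen₂]) (by
        intro z hz
        rcases List.mem_cons.mp hz with rfl | hz
        · exact h₁m
        · exact hmem₂ z hz) hC x hx hxQy
    have hD : IsWeaklyRegular N (y :: x :: l₃) :=
      (isWeaklyRegular_cons_iff N y (x :: l₃)).mpr ⟨hyN, hreg₃⟩
    have hE : IsWeaklyRegular N (x :: y :: l₃) :=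
      IsLocalRing.isWeaklyRegular_of_perm_of_subset_maximalIdeal hD (List.Perm.swap x y l₃) (by
        intro z hz
        rcases List.mem_cons.mp hz with rfl | hz
        · exact hym
        rcases List.mem_cons.mp hz with rfl | hz
        · exact hx
        · exact hmem₃ z hz)
    exact ⟨y :: l₃, by simp [hlen₃], (by
      intro z hz
      rcases List.mem_cons.mp hz with rfl | hz
      · exact hym
      · exact hmem₃ z hz), hE⟩

lemma exists_list_of_le_moduleDepth {N : Type*} [AddCommGroup N] [Module S N] {n : ℕ}
    (h : (n : ℕ∞) ≤ moduleDepth S N) :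
    ∃ l : List S, l.length = n ∧ (∀ z ∈ l, z ∈ maximalIdeal S) ∧ IsWeaklyRegular N l := by
  rcases n with _ | k
  · exact ⟨[], rfl, by simp, IsWeaklyRegular.nil _ _⟩
  have h2 : ∃ m ∈ {n : ℕ∞ | ∃ fs : List S, (fs.length : ℕ∞) = n ∧
      (∀ f ∈ fs, f ∈ maximalIdeal S) ∧ IsWeaklyRegular N fs}, ((k + 1 : ℕ) : ℕ∞) ≤ m := by
    by_contra hc
    push_neg at hc
    have hbound : moduleDepth S N ≤ (k : ℕ∞) := by
      rw [moduleDepth]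
      apply sSup_le
      intro m hm
      have := hc m hm
      rwa [show ((k + 1 : ℕ) : ℕ∞) = (k : ℕ∞) + 1 by exact_mod_cast rfl,
        ENat.lt_add_one_iff (by simp)] at this
    have : ((k + 1 : ℕ) : ℕ∞) ≤ (k : ℕ∞) := le_trans h hbound
    exact absurd (by exact_mod_cast this) (Nat.not_succ_le_self k)
  obtain ⟨m, hm, hle⟩ := h2
  obtain ⟨fs, hfslen, hfsmem, hfsreg⟩ := hm
  have hlen : k + 1 ≤ fs.length := by
    rw [← hfslen] at hle
    exact_mod_cast hle
  refine ⟨fs.take (k + 1), by rw [List.length_take]; omega,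
    fun z hz => hfsmem z (List.mem_of_mem_take hz), ?_⟩
  exact ((isWeaklyRegular_append_iff N (fs.take (k + 1)) (fs.drop (k + 1))).mp
    (by rwa [List.take_append_drop])).1

lemma le_moduleDepth_of_list {N : Type*} [AddCommGroup N] [Module S N] {l : List S}
    (hmem : ∀ z ∈ l, z ∈ maximalIdeal S) (hreg : IsWeaklyRegular N l) :
    (l.length : ℕ∞) ≤ moduleDepth S N :=
  le_sSup ⟨l, rfl, hmem, hreg⟩

end LocalRing

section Loc

lemma lm_mk_eq_zero {R : Type*} [CommRing R] {p : Submonoid R} {M : Type*} [AddCommGroup M]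
    [Module R M] {m : M} {s : p} :
    (LocalizedModule.mk m s : LocalizedModule p M) = 0 ↔ ∃ u : p, (u : R) • m = 0 := by
  rw [show (0 : LocalizedModule p M) = LocalizedModule.mk 0 1 from (LocalizedModule.zero_mk 1).symm,
    LocalizedModule.mk_eq]
  constructor
  · rintro ⟨u, hu⟩
    simp only [one_smul, smul_zero] at hu
    exact ⟨u, by simpa [Submonoid.smul_def] using hu⟩
  · rintro ⟨u, hu⟩
    refine ⟨u, ?_⟩
    simp [Submonoid.smul_def, hu]

lemma isSMulRegular_localizedModule {R : Type*} [CommRing R] (q : Ideal R) [q.IsPrime]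
    {M : Type*} [AddCommGroup M] [Module R M] {g : R} (hg : IsSMulRegular M g) :
    IsSMulRegular (LocalizedModule q.primeCompl M) (algebraMap R (Localization.AtPrime q) g) := by
  apply isSMulRegular_of_smul_eq_zero'
  intro w hw
  induction w using LocalizedModule.induction_on with
  | _ m s =>
    rw [← Localization.mk_one_eq_algebraMap, LocalizedModule.mk_smul_mk] at hw
    obtain ⟨u, hu⟩ := lm_mk_eq_zero.mp hw
    have hum : (u : R) • m = 0 := hg (show g • ((u : R) • m) = g • 0 by
      rw [smul_comm, hu, smul_zero])
    exact lm_mk_eq_zero.mpr ⟨u, hum⟩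

lemma localized'_ideal_smul_top
    {R : Type*} [CommRing R] {S' : Type*} [CommRing S'] {M N : Type*}
    [AddCommGroup M] [AddCommGroup N] [Module R M] [Module R N] [Algebra R S'] [Module S' N]
    [IsScalarTower R S' N] (p : Submonoid R) [IsLocalization p S'] (f : M →ₗ[R] N)
    [IsLocalizedModule p f] (I : Ideal R) :
    (I • ⊤ : Submodule R M).localized' S' p f = I.map (algebraMap R S') • ⊤ := by
  apply le_antisymm
  · rintro x ⟨m, hm, s, rfl⟩
    have key : ∀ m' ∈ (I • ⊤ : Submodule R M), ∀ s : p,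
        IsLocalizedModule.mk' f m' s ∈ (I.map (algebraMap R S') • ⊤ : Submodule S' N) := by
      intro m' hm'
      refine Submodule.smul_induction_on hm' ?_ ?_
      · intro r hr n _ s
        rw [IsLocalizedModule.mk'_smul, ← algebraMap_smul S' r]
        exact Submodule.smul_mem_smul (Ideal.mem_map_of_mem _ hr) trivial
      · intro a b ha hb s
        rw [IsLocalizedModule.mk'_add]
        exact add_mem (ha s) (hb s)
    exact key m hm s
  · rw [Submodule.smul_le]
    rintro r hr n -
    have key : ∀ r' ∈ Ideal.map (algebraMap R S') I, ∀ n' : N,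
        r' • n' ∈ (I • ⊤ : Submodule R M).localized' S' p f := by
      intro r' hr'
      refine Submodule.span_induction (p := fun r' _ => ∀ n' : N,
        r' • n' ∈ (I • ⊤ : Submodule R M).localized' S' p f) ?_ ?_ ?_ ?_ hr'
      · rintro _ ⟨i, hi, rfl⟩ n'
        obtain ⟨⟨m, s⟩, rfl⟩ := IsLocalizedModule.mk'_surjective p f n'
        simp only [Function.uncurry_apply_pair]
        rw [algebraMap_smul, ← IsLocalizedModule.mk'_smul]
        exact ⟨i • m, Submodule.smul_mem_smul hi trivial, s, rfl⟩
      · intro n'; rw [zero_smul]; exact zero_mem _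
      · intro a b _ _ ha hb n'
        rw [add_smul]; exact add_mem (ha n') (hb n')
      · intro a r' _ hrn n'
        rw [smul_eq_mul, mul_smul]
        exact Submodule.smul_mem _ a (hrn n')
    exact key r hr n

/-- Upgrade an `R`-linear equivalence between modules over a localization to a linear
equivalence over the localization. -/
noncomputable def extendEquiv {R : Type*} [CommSemiring R] (p : Submonoid R) (S : Type*)
    [CommSemiring S] [Algebra R S] [IsLocalization p S] {A B : Type*} [AddCommMonoid A]
    [AddCommMonoid B] [Module R A] [Module R B] [Module S A] [Module S B]
    [IsScalarTower R S A] [IsScalarTower R S B] (e : A ≃ₗ[R] B) : A ≃ₗ[S] B :=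
  { e.toLinearMap.extendScalarsOfIsLocalization p S with
    invFun := e.symm
    left_inv := e.left_inv
    right_inv := e.right_inv }

@[simp] lemma extendEquiv_apply {R : Type*} [CommSemiring R] (p : Submonoid R) (S : Type*)
    [CommSemiring S] [Algebra R S] [IsLocalization p S] {A B : Type*} [AddCommMonoid A]
    [AddCommMonoid B] [Module R A] [Module R B] [Module S A] [Module S B]
    [IsScalarTower R S A] [IsScalarTower R S B] (e : A ≃ₗ[R] B) (a : A) :
    extendEquiv p S e a = e a := rfl

/-- Localization of a quotient by `I • ⊤`. -/
noncomputable def locQuotEquiv {R : Type*} [CommRing R] {M : Type*} [AddCommGroup M] [Module R M]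
    (q : Ideal R) [q.IsPrime] (I : Ideal R) :
    LocalizedModule q.primeCompl (M ⧸ (I • ⊤ : Submodule R M)) ≃ₗ[Localization.AtPrime q]
      (LocalizedModule q.primeCompl M ⧸
        (I.map (algebraMap R (Localization.AtPrime q)) • ⊤ :
          Submodule (Localization.AtPrime q) (LocalizedModule q.primeCompl M))) :=
  extendEquiv q.primeCompl (Localization.AtPrime q)
    ((IsLocalizedModule.iso q.primeCompl
        ((I • ⊤ : Submodule R M).toLocalizedQuotient' (Localization.AtPrime q) q.primeCompl
          (LocalizedModule.mkLinearMap q.primeCompl M))).trans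
      ((Submodule.quotEquivOfEq _ _
        (localized'_ideal_smul_top q.primeCompl
          (LocalizedModule.mkLinearMap q.primeCompl M) I)).restrictScalars R))

end Loc

section Chain

variable {R : Type*} [CommRing R] [IsNoetherianRing R] [IsLocalRing R]

lemma exists_assoc_quot_span_smul {M : Type*} [AddCommGroup M] [Module R M] [Module.Finite R M]
    {q : Ideal R} (hq : q ∈ associatedPrimes R M) {g : R} (hgm : g ∈ maximalIdeal R)
    (hgreg : IsSMulRegular M g) :
    ∃ q' ∈ associatedPrimes R (M ⧸ (Ideal.span {g} • ⊤ : Submodule R M)), q ≤ q' := by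
  obtain ⟨hqp, x, hx⟩ := isAssociatedPrime_iff'.mp hq
  have hx0 : x ≠ 0 := by
    rintro rfl
    exact hqp.ne_top (hx.trans (by
      rw [Submodule.span_singleton_eq_bot.mpr rfl, Submodule.annihilator_bot]))
  set K := Submodule.torsionBySet R M (q : Set R) with hK
  have hxK : x ∈ K := by
    rw [hK, Submodule.mem_torsionBySet_iff]
    rintro ⟨a, ha⟩
    exact (Submodule.mem_annihilator_span_singleton x a).mp (hx ▸ ha)
  have hKle : ¬ K ≤ (Ideal.span {g} • ⊤ : Submodule R M) := by
    intro hle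
    have hsm : K ≤ Ideal.span {g} • K := by
      intro y hy
      obtain ⟨m, hm⟩ := (mem_span_singleton_smul_top_iff g y).mp (hle hy)
      have hmK : m ∈ K := by
        rw [hK, Submodule.mem_torsionBySet_iff]
        rintro ⟨a, ha⟩
        have hay : (a : R) • y = 0 := by
          rw [hK, Submodule.mem_torsionBySet_iff] at hy
          exact hy ⟨a, ha⟩
        have : g • ((a : R) • m) = 0 := by rw [smul_comm, hm]; exact hay
        exact hgreg (show g • ((a : R) • m) = g • 0 by rw [this, smul_zero])
      rw [← hm]
      exact Submodule.smul_mem_smul (Submodule.mem_span_singleton_self g) hmK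
    have hbot := Submodule.eq_bot_of_le_smul_of_le_jacobson_bot (Ideal.span {g}) K
      (IsNoetherian.noetherian K) hsm (by
        rw [IsLocalRing.jacobson_eq_maximalIdeal ⊥ bot_ne_top]
        rw [Ideal.span_le, Set.singleton_subset_iff]
        exact hgm)
    rw [hbot] at hxK
    exact hx0 (by simpa using hxK)
  obtain ⟨y, hyK, hyn⟩ := SetLike.not_le_iff_exists.mp hKle
  have hy0 : ((Ideal.span {g} • ⊤ : Submodule R M).mkQ y) ≠ 0 := by
    rw [Submodule.mkQ_apply, ne_eq, Submodule.Quotient.mk_eq_zero]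
    exact hyn
  obtain ⟨q', hq', hleq'⟩ := exists_le_isAssociatedPrime_of_isNoetherianRing R _ hy0
  refine ⟨q', hq', le_trans ?_ hleq'⟩
  intro a ha
  rw [Submodule.mem_colon_singleton, Submodule.mem_bot, ← map_smul]
  have hay : a • y = 0 := by
    rw [hK, Submodule.mem_torsionBySet_iff] at hyK
    exact hyK ⟨a, ha⟩
  rw [hay, map_zero]

lemma ofList_le_annihilator_quot {M : Type*} [AddCommGroup M] [Module R M] (I : Ideal R) :
    I ≤ Module.annihilator R (M ⧸ (I • ⊤ : Submodule R M)) := by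
  intro a ha
  rw [Module.mem_annihilator]
  intro w
  obtain ⟨m, rfl⟩ := Submodule.mkQ_surjective _ w
  rw [← map_smul, Submodule.mkQ_apply, Submodule.Quotient.mk_eq_zero]
  exact Submodule.smul_mem_smul ha trivial

lemma no_ass_of_ofList_le {M : Type*} [AddCommGroup M] [Module R M] [Module.Finite R M]
    (f₁ : R) (fs : List R)
    (h : ∀ p ∈ Module.support R (M ⧸ (Ideal.ofList (f₁ :: fs) • ⊤ : Submodule R M)),
      ((f₁ :: fs).length : ℕ∞) ≤
        moduleDepth (Localization.AtPrime p.asIdeal) (LocalizedModule p.asIdeal.primeCompl M))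
    {q : Ideal R} (hq : q ∈ associatedPrimes R M) (hle : Ideal.ofList (f₁ :: fs) ≤ q) :
    False := by
  haveI hqp : q.IsPrime := hq.isPrime
  obtain ⟨-, x, hx⟩ := isAssociatedPrime_iff'.mp hq
  set I := Ideal.ofList (f₁ :: fs) with hI
  set p : PrimeSpectrum R := ⟨q, hqp⟩ with hp
  set S := Localization.AtPrime q with hS
  set N := LocalizedModule q.primeCompl M with hN
  haveI : Module.Finite S N :=
    Module.Finite.of_isLocalizedModule q.primeCompl (LocalizedModule.mkLinearMap q.primeCompl M)
  haveI : IsNoetherianRing S := IsLocalization.isNoetherianRing q.primeCompl S inferInstance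
  have hx1 : (LocalizedModule.mk x (1 : q.primeCompl) : N) ≠ 0 := by
    intro h0
    obtain ⟨u, hu⟩ := lm_mk_eq_zero.mp h0
    exact u.2 (hx ▸ (Submodule.mem_annihilator_span_singleton x (u : R)).mpr hu)
  haveI : Nontrivial N := ⟨_, _, hx1⟩
  have hImax : I.map (algebraMap R S) ≤ maximalIdeal S := by
    rw [Ideal.map_le_iff_le_comap]
    intro a ha
    rw [Ideal.mem_comap]
    exact (IsLocalization.AtPrime.to_map_mem_maximal_iff S q a).mpr (hle ha)
  have hne : (I.map (algebraMap R S) • ⊤ : Submodule S N) ≠ ⊤ := by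
    apply Ne.symm
    apply Submodule.top_ne_ideal_smul_of_le_jacobson_annihilator
    refine le_trans hImax ?_
    rw [← IsLocalRing.jacobson_eq_maximalIdeal (⊥ : Ideal S) bot_ne_top]
    exact Ideal.jacobson_mono bot_le
  have hsupp : p ∈ Module.support R (M ⧸ (I • ⊤ : Submodule R M)) := by
    rw [Module.mem_support_iff]
    haveI : Nontrivial (N ⧸ (I.map (algebraMap R S) • ⊤ : Submodule S N)) :=
      Submodule.Quotient.nontrivial_iff.mpr hne
    exact Equiv.nontrivial (locQuotEquiv q I).toEquiv
  have hdepth := h p hsupp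
  obtain ⟨l, hl1, hlmem, hlreg⟩ := exists_list_of_le_moduleDepth (N := N) (n := 1)
    (le_trans (by exact_mod_cast Nat.succ_le_succ (Nat.zero_le _)) hdepth)
  obtain ⟨z, l', rfl⟩ : ∃ a t, l = a :: t := by
    cases l with
    | nil => simp at hl1
    | cons a t => exact ⟨a, t, rfl⟩
  have hzreg : IsSMulRegular N z := ((isWeaklyRegular_cons_iff N z l').mp hlreg).1
  have hzm : z ∈ maximalIdeal S := hlmem z (by simp)
  obtain ⟨a, t, rfl⟩ := IsLocalization.exists_mk'_eq q.primeCompl z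
  have haq : a ∈ q := (IsLocalization.AtPrime.mk'_mem_maximal_iff S q a t).mp hzm
  have hax : a • x = 0 := (Submodule.mem_annihilator_span_singleton x a).mp (hx ▸ haq)
  have hkill : IsLocalization.mk' S a t • (LocalizedModule.mk x (1 : q.primeCompl) : N) = 0 := by
    rw [← Localization.mk_eq_mk', LocalizedModule.mk_smul_mk, hax, LocalizedModule.zero_mk]
  exact hx1 (hzreg (show _ • _ = _ • (0 : N) by rw [hkill, smul_zero]))

end Chain

section Main

universe uM

lemma aux_main {R : Type*} [CommRing R] [IsNoetherianRing R] [IsLocalRing R] :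
    ∀ (n : ℕ) {M : Type uM} [AddCommGroup M] [Module R M] [Module.Finite R M]
      (f₁ : R) (fs : List R), fs.length = n →
      (∀ f ∈ f₁ :: fs, f ∈ maximalIdeal R) →
      (∀ p ∈ Module.support R (M ⧸ (Ideal.ofList (f₁ :: fs) • ⊤ : Submodule R M)),
        ((f₁ :: fs).length : ℕ∞) ≤ moduleDepth (Localization.AtPrime p.asIdeal)
          (LocalizedModule p.asIdeal.primeCompl M)) →
      ∀ q ∈ associatedPrimes R M, f₁ ∉ q := by
  intro n
  induction n with
  | zero =>
    intro M _ _ _ f₁ fs hlen hmem h q hq hf₁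
    obtain rfl : fs = [] := List.length_eq_zero_iff.mp hlen
    apply no_ass_of_ofList_le f₁ [] h hq
    rw [Ideal.ofList_singleton, Ideal.span_singleton_le_iff_mem]
    exact hf₁
  | succ n ih =>
    intro M _ _ _ f₁ fs hlen hmem h q hq hf₁q
    obtain ⟨f₂, fs', rfl⟩ : ∃ a t, fs = a :: t := by
      cases fs with
      | nil => simp at hlen
      | cons a t => exact ⟨a, t, rfl⟩
    have hLne : (f₁ :: f₂ :: fs') ≠ [] := by simp
    set b := (f₁ :: f₂ :: fs').getLast hLne with hbdef
    have hdrop : (f₁ :: f₂ :: fs').dropLast = f₁ :: (f₂ :: fs').dropLast := rfl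
    have hJb : Ideal.ofList (f₁ :: f₂ :: fs') =
        Ideal.ofList (f₁ :: (f₂ :: fs').dropLast) ⊔ Ideal.span {b} := by
      conv_lhs => rw [← List.dropLast_append_getLast hLne]
      rw [Ideal.ofList_append, Ideal.ofList_singleton, hdrop]
    have hC1 : ∀ q' ∈ associatedPrimes R M, ¬ Ideal.ofList (f₁ :: f₂ :: fs') ≤ q' :=
      fun q' hq' hle => no_ass_of_ofList_le f₁ (f₂ :: fs') h hq' hle
    have hfin := associatedPrimes_finite R M
    obtain ⟨a, haJ, hga⟩ := coset_avoidance hfin.toFinset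
      (fun p hp => (hfin.mem_toFinset.mp hp).isPrime)
      (Ideal.ofList (f₁ :: (f₂ :: fs').dropLast)) b (by
        rintro p hp ⟨h1, h2⟩
        exact hC1 p (hfin.mem_toFinset.mp hp) (by
          rw [hJb]
          exact sup_le h1 ((Ideal.span_singleton_le_iff_mem _).mpr h2)))
    have hgAss : ∀ p' ∈ associatedPrimes R M, b + a ∉ p' :=
      fun p' hp' => hga p' (hfin.mem_toFinset.mpr hp')
    set g := b + a with hgdef
    have hgreg : IsSMulRegular M g := by
      by_contra hc
      obtain ⟨P, hP, hgP⟩ := exists_associated_of_not_regular hc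
      exact hgAss P hP hgP
    have hgI : g ∈ Ideal.ofList (f₁ :: f₂ :: fs') := by
      rw [hJb]
      exact Submodule.add_mem _
        (Submodule.mem_sup_right (Submodule.mem_span_singleton_self b))
        (Submodule.mem_sup_left haJ)
    have hIeq : Ideal.span {g} ⊔ Ideal.ofList (f₁ :: (f₂ :: fs').dropLast) =
        Ideal.ofList (f₁ :: f₂ :: fs') := by
      apply le_antisymm
      · apply sup_le
        · rw [Ideal.span_singleton_le_iff_mem]; exact hgI
        · rw [hJb]; exact le_sup_left
      · rw [hJb]
        apply sup_le le_sup_right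
        rw [Ideal.span_singleton_le_iff_mem]
        have hb : b = g - a := by rw [hgdef]; ring
        rw [hb]
        exact Submodule.sub_mem _
          (Submodule.mem_sup_left (Submodule.mem_span_singleton_self g))
          (Submodule.mem_sup_right haJ)
    have hLm : Ideal.ofList (f₁ :: f₂ :: fs') ≤ maximalIdeal R :=
      Ideal.span_le.mpr fun z hz => hmem z hz
    have hgm : g ∈ maximalIdeal R := hLm hgI
    have hIH : ∀ q' ∈ associatedPrimes R (M ⧸ (Ideal.span {g} • ⊤ : Submodule R M)),
        f₁ ∉ q' := by
      refine ih f₁ ((f₂ :: fs').dropLast) ?_ ?_ ?_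
      · rw [List.length_dropLast]
        simp only [List.length_cons] at hlen ⊢
        omega
      · intro f hf
        rcases List.mem_cons.mp hf with rfl | hf
        · exact hmem f (by simp)
        · exact hmem f (List.mem_cons_of_mem _ ((List.dropLast_sublist _).subset hf))
      · intro p hp
        haveI := p.2
        have eSupp : ((M ⧸ (Ideal.span {g} • ⊤ : Submodule R M)) ⧸
            (Ideal.ofList (f₁ :: (f₂ :: fs').dropLast) • ⊤ :
              Submodule R (M ⧸ (Ideal.span {g} • ⊤ : Submodule R M)))) ≃ₗ[R]
            M ⧸ (Ideal.ofList (f₁ :: f₂ :: fs') • ⊤ : Submodule R M) := by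
          have h1 : (Ideal.ofList (f₁ :: (f₂ :: fs').dropLast) • ⊤ :
              Submodule R (M ⧸ (Ideal.span {g} • ⊤ : Submodule R M))) =
              Submodule.map (Ideal.span {g} • ⊤ : Submodule R M).mkQ
                (Ideal.ofList (f₁ :: (f₂ :: fs').dropLast) • ⊤ : Submodule R M) := by
            rw [Submodule.map_smul'', Submodule.map_top, Submodule.range_mkQ]
          have h2 : (Ideal.span {g} • ⊤ : Submodule R M) ⊔
              (Ideal.ofList (f₁ :: (f₂ :: fs').dropLast) • ⊤ : Submodule R M) =
              (Ideal.ofList (f₁ :: f₂ :: fs') • ⊤ : Submodule R M) := by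
            rw [← Submodule.sup_smul, hIeq]
          exact LinearEquiv.trans (Submodule.quotEquivOfEq _ _ h1)
            (LinearEquiv.trans
              (Submodule.quotientQuotientEquivQuotientSup
                (Ideal.span {g} • ⊤ : Submodule R M)
                (Ideal.ofList (f₁ :: (f₂ :: fs').dropLast) • ⊤ : Submodule R M))
              (Submodule.quotEquivOfEq _ _ h2))
        have hpS : p ∈ Module.support R
            (M ⧸ (Ideal.ofList (f₁ :: f₂ :: fs') • ⊤ : Submodule R M)) :=
          (LinearEquiv.support_eq eSupp) ▸ hp
        have hd := h p hpS
        set S := Localization.AtPrime p.asIdeal with hSdef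
        set N := LocalizedModule p.asIdeal.primeCompl M with hNdef
        haveI : Module.Finite S N :=
          Module.Finite.of_isLocalizedModule p.asIdeal.primeCompl
            (LocalizedModule.mkLinearMap _ M)
        haveI : IsNoetherianRing S :=
          IsLocalization.isNoetherianRing p.asIdeal.primeCompl S inferInstance
        obtain ⟨l, hllen, hlmem, hlreg⟩ := exists_list_of_le_moduleDepth (N := N)
          (n := n + 2) (by
            refine le_trans (le_of_eq ?_) hd
            simp only [List.length_cons] at hlen ⊢
            have hnn : fs'.length + 1 + 1 = n + 2 := by omega
            exact_mod_cast hnn.symm)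
        have hgp : g ∈ p.asIdeal := by
          have h1 : Ideal.ofList (f₁ :: f₂ :: fs') ≤ p.asIdeal :=
            le_trans (ofList_le_annihilator_quot _) (Module.annihilator_le_of_mem_support hpS)
          exact h1 hgI
        have hgmS : algebraMap R S g ∈ maximalIdeal S :=
          (IsLocalization.AtPrime.to_map_mem_maximal_iff S p.asIdeal g).mpr hgp
        have hgregS : IsSMulRegular N (algebraMap R S g) :=
          isSMulRegular_localizedModule p.asIdeal hgreg
        obtain ⟨l', hl'len, hl'mem, hl'reg⟩ := depth_drop (n + 1) l (by omega) hlmem hlreg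
          (algebraMap R S g) hgmS hgregS
        have hl'q : IsWeaklyRegular (QuotSMulTop (algebraMap R S g) N) l' :=
          ((isWeaklyRegular_cons_iff N _ l').mp hl'reg).2
        have e' : LocalizedModule p.asIdeal.primeCompl
            (M ⧸ (Ideal.span {g} • ⊤ : Submodule R M))
            ≃ₗ[S] QuotSMulTop (algebraMap R S g) N := by
          refine (locQuotEquiv p.asIdeal (Ideal.span {g})).trans
            (Submodule.quotEquivOfEq _ _ ?_)
          rw [Ideal.map_span, Set.image_singleton, Submodule.ideal_span_singleton_smul]
        have hregM' : IsWeaklyRegular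
            (LocalizedModule p.asIdeal.primeCompl
              (M ⧸ (Ideal.span {g} • ⊤ : Submodule R M))) l' :=
          (e'.isWeaklyRegular_congr l').mpr hl'q
        refine le_trans (le_of_eq ?_) (le_moduleDepth_of_list hl'mem hregM')
        rw [hl'len]
        simp only [List.length_cons, List.length_dropLast]
        have hnn : fs'.length + 1 - 1 + 1 = n + 1 := by
          simp only [List.length_cons] at hlen
          omega
        exact_mod_cast hnn
    obtain ⟨q', hq', hqq'⟩ := exists_assoc_quot_span_smul hq hgm hgreg
    exact hIH q' hq' (hqq' hf₁q)

end Main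

/-- Let `(R,𝔪)` be a noetherian local ring, `M` a finitely generated `R`-module and
`f₁,…,f_r ∈ 𝔪` (here the sequence is `f₁ :: fs`). If `depth_{R_𝔭}(M_𝔭) ≥ r` for every
prime `𝔭 ∈ Supp(M/(f₁,…,f_r)M)`, then `f₁ ∉ 𝔭` for every `𝔭 ∈ Ass(M)`; in particular
`f₁` is a non-zero divisor on `M`. -/
theorem first_elem_not_mem_ass_of_depth_ge
    {R : Type*} [CommRing R] [IsNoetherianRing R] [IsLocalRing R]
    {M : Type*} [AddCommGroup M] [Module R M] [Module.Finite R M]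
    (f₁ : R) (fs : List R) (hmem : ∀ f ∈ f₁ :: fs, f ∈ IsLocalRing.maximalIdeal R)
    (h : ∀ p ∈ Module.support R (M ⧸ (Ideal.ofList (f₁ :: fs) • ⊤ : Submodule R M)),
      ((f₁ :: fs).length : ℕ∞) ≤
        moduleDepth (Localization.AtPrime p.asIdeal) (LocalizedModule p.asIdeal.primeCompl M)) :
    (∀ p ∈ associatedPrimes R M, f₁ ∉ p) ∧ IsSMulRegular M f₁ := by
  have part1 : ∀ p ∈ associatedPrimes R M, f₁ ∉ p := aux_main fs.length f₁ fs rfl hmem h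
  refine ⟨part1, ?_⟩
  by_contra hc
  obtain ⟨P, hP, hfP⟩ := exists_associated_of_not_regular hc
  exact part1 P hP hfP
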